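/- For every real w with w > √3, the function g(w) := (1/2)·log(2w/(1 + w²)^{1/2} − √3) is differentiable and g'(w) = 1/(2w³ + 2w − √3(1 + w²)^{3/2}). -/

import Mathlib

open Real

theorem hasDerivAt_div_sqrt_one_add_sq (x : ℝ) :
    HasDerivAt (fun x : ℝ => x / √(1 + x ^ 2)) (1 / √(1 + x ^ 2) ^ 3) x := by
  have hpos : 0 < 1 + x ^ 2 := by positivity
  have hs2 : √(1 + x ^ 2) ^ 2 = 1 + x ^ 2 := sq_sqrt hpos.le
  have hsqrt : HasDerivAt (fun x : ℝ => √(1 + x ^ 2)) (x / √(1 + x ^ 2)) x := by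
    refine (((hasDerivAt_pow 2 x).const_add 1).sqrt hpos.ne').congr_deriv ?_
    field_simp
    norm_num
  refine ((hasDerivAt_id' x).div hsqrt (sqrt_pos.2 hpos).ne').congr_deriv ?_
  field_simp
  linear_combination hs2

theorem sqrt_three_mul_sqrt_one_add_sq_lt {w : ℝ} (hw : √3 < w) :
    √3 * √(1 + w ^ 2) < 2 * w := by
  have hw0 : 0 < w := (sqrt_nonneg 3).trans_lt hw
  have hw2 : 3 < w ^ 2 := by simpa using (sqrt_lt' hw0).1 hw
  rw [← sqrt_mul (by norm_num), sqrt_lt' (by positivity)]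
  linarith

/-- for `w > √3`, the function `g(w) = (1/2)·log(2w/√(1+w²) − √3)` is
differentiable with `g'(w) = 1/(2w³ + 2w − √3(1+w²)^{3/2})`. -/
theorem stmt_10 :
    ∀ w : ℝ, Real.sqrt 3 < w →
      HasDerivAt (fun w' : ℝ =>
          (1 / 2) * Real.log (2 * w' / Real.sqrt (1 + w' ^ 2) - Real.sqrt 3))
        (1 / (2 * w ^ 3 + 2 * w - Real.sqrt 3 * (Real.sqrt (1 + w ^ 2)) ^ 3)) w := by
  intro w hw
  have hs : 0 < √(1 + w ^ 2) := by positivity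
  have hs2 : √(1 + w ^ 2) ^ 2 = 1 + w ^ 2 := sq_sqrt (by positivity)
  have hlt := sqrt_three_mul_sqrt_one_add_sq_lt hw
  have harg : 0 < 2 * w / √(1 + w ^ 2) - √3 := by
    rw [sub_pos, lt_div_iff₀ hs]
    linarith
  have hderiv := ((((hasDerivAt_div_sqrt_one_add_sq w).const_mul 2).sub_const √3).log
    (by rw [← mul_div_assoc]; exact harg.ne')).const_mul (1 / 2)
  simp only [← mul_div_assoc] at hderiv
  have hden : √(1 + w ^ 2) ^ 3 * (2 * w / √(1 + w ^ 2) - √3) =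
      2 * w ^ 3 + 2 * w - √3 * √(1 + w ^ 2) ^ 3 := by
    field_simp
    linear_combination 2 * w * hs2
  refine hderiv.congr_deriv ?_
  rw [div_div, hden]
  norm_num
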